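/- For every integer N ≥ 1, every 1 ≤ ℓ ≤ N, and all binary strings b, b' ∈ {0,1}^N that agree in their first ℓ bits, the potentials Ṽ_b and Ṽ_{b'} coincide on the set {(x,y) ∈ ℝ² : x < (1/4)·2^{-3N} or |y − [b]_ℓ x| > 100 · 2^{-ℓ} x}. -/

import Mathlib

open scoped BigOperators

/-- `[b]_k = ∑_{i=1}^k b_i 2^{-(i+2)}` (bits are zero-indexed in `b`). -/
noncomputable def bitsVal (b : ℕ → Bool) (k : ℕ) : ℝ :=
  ∑ i ∈ Finset.range k, (if b i then (1 : ℝ) else 0) * (2 : ℝ) ^ (-((i : ℤ) + 3))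

/-- `φ_{k,b}(x,y) = max(0, |y − [b]_k x| − (2^{-k} x + 2^{-(3N−k)}))`. -/
noncomputable def phi (N : ℕ) (b : ℕ → Bool) (k : ℕ) (x y : ℝ) : ℝ :=
  max 0 (|y - bitsVal b k * x| - ((2 : ℝ) ^ (-(k : ℤ)) * x + (2 : ℝ) ^ (-(3 * (N : ℤ) - k))))

/-- `max_{k=1,…,j} 2^{-k} φ_{k,b}(x,y)`. -/
noncomputable def maxPhi (N : ℕ) (b : ℕ → Bool) (j : ℕ) (x y : ℝ) : ℝ :=
  ⨆ k : Finset.Icc 1 j, (2 : ℝ) ^ (-((k : ℕ) : ℤ)) * phi N b (k : ℕ) x y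

/-- The potential `Ṽ_b = 2^{7N} max_{k=1,…,N} 2^{-k} φ_{k,b}`. -/
noncomputable def Vt (N : ℕ) (b : ℕ → Bool) (x y : ℝ) : ℝ :=
  2 ^ (7 * N) * maxPhi N b N x y

lemma bitsVal_congr (b b' : ℕ → Bool) (ℓ k : ℕ) (hk : k ≤ ℓ)
    (h : ∀ i < ℓ, b i = b' i) : bitsVal b k = bitsVal b' k := by
  unfold bitsVal
  refine Finset.sum_congr rfl fun i hi => ?_
  rw [h i (lt_of_lt_of_le (Finset.mem_range.1 hi) hk)]

lemma bitsVal_mono (b : ℕ → Bool) {ℓ k : ℕ} (h : ℓ ≤ k) :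
    bitsVal b ℓ ≤ bitsVal b k := by
  unfold bitsVal
  refine Finset.sum_le_sum_of_subset_of_nonneg (Finset.range_subset_range.2 h) fun i _ _ => ?_
  have : (0:ℝ) < (2:ℝ) ^ (-((i : ℤ) + 3)) := zpow_pos (by norm_num) _
  positivity

lemma bitsVal_le (b : ℕ → Bool) {ℓ k : ℕ} (h : ℓ ≤ k) :
    bitsVal b k ≤ bitsVal b ℓ + 2 ^ (-(ℓ:ℤ) - 2) - 2 ^ (-(k:ℤ) - 2) := by
  induction k, h using Nat.le_induction with
  | base => linarith
  | succ k hk ih =>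
    have hstep : bitsVal b (k+1) = bitsVal b k
        + (if b k then (1 : ℝ) else 0) * (2 : ℝ) ^ (-((k : ℤ) + 3)) := by
      unfold bitsVal
      rw [Finset.sum_range_succ]
    have hterm : (if b k then (1 : ℝ) else 0) * (2 : ℝ) ^ (-((k : ℤ) + 3))
        ≤ (2:ℝ) ^ (-((k:ℤ)) - 3) := by
      have hp : (0:ℝ) < (2:ℝ) ^ (-((k : ℤ)) - 3) := zpow_pos (by norm_num) _
      have he : (-((k : ℤ) + 3)) = (-(k:ℤ) - 3) := by ring
      rw [he]
      split <;> simp [hp.le]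
    have h1 : (2:ℝ) ^ (-(k:ℤ) - 2) = 2 * (2:ℝ) ^ (-(k:ℤ) - 3) := by
      rw [show (-(k:ℤ) - 2) = 1 + (-(k:ℤ) - 3) by ring, zpow_add₀ (two_ne_zero)]
      norm_num
    have h2 : (2:ℝ) ^ (-((k:ℕ)+1:ℕ):ℤ) - 2 = (2:ℝ) ^ (-(k:ℤ) - 1) - 2 := by
      push_cast; ring_nf
    have h3 : (-(((k:ℕ)+1:ℕ)):ℤ) - 2 = -(k:ℤ) - 3 := by push_cast; ring
    rw [hstep, h3]
    linarith

lemma bitsVal_diff (b : ℕ → Bool) {ℓ k : ℕ} (h : ℓ ≤ k) :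
    |bitsVal b k - bitsVal b ℓ| ≤ 2 ^ (-(ℓ:ℤ) - 2) := by
  have h1 := bitsVal_mono b h
  have h2 := bitsVal_le b h
  have h3 : (0:ℝ) < (2:ℝ) ^ (-(k:ℤ) - 2) := zpow_pos (by norm_num) _
  rw [abs_le]
  constructor <;> linarith [zpow_pos (show (0:ℝ) < 2 by norm_num) (-(ℓ:ℤ) - 2)]

lemma arith (s t E Dl Dk A Ak x : ℝ) (hs : 0 < s) (ht : 0 < t) (hE : 0 < E)
    (hDl : 0 < Dl) (hDk : 0 < Dk) (hE1 : t * Dl = E) (hE2 : s * Dk = E)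
    (h2s : 2 * s ≤ t) (ht2 : 2 * t ≤ 1)
    (hA0 : 0 ≤ A) (hAk0 : 0 ≤ Ak) (hAk : 4 * Ak ≤ 4 * A + t * |x|)
    (hS : 4 * x < E ∨ 100 * t * x < A) :
    s * max 0 (Ak - (s * x + Dk)) ≤ t * max 0 (A - (t * x + Dl)) := by
  have hR0 : 0 ≤ t * max 0 (A - (t * x + Dl)) := mul_nonneg ht.le (le_max_left _ _)
  have hRz : t * (A - (t * x + Dl)) ≤ t * max 0 (A - (t * x + Dl)) :=
    mul_le_mul_of_nonneg_left (le_max_right _ _) ht.le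
  rcases le_total (Ak - (s * x + Dk)) 0 with hneg | hpos
  · rw [max_eq_left hneg]; simpa using hR0
  rw [max_eq_right hpos]
  rcases le_total x 0 with hx0 | hx0
  · -- x ≤ 0
    rw [abs_of_nonpos hx0] at hAk
    refine le_trans ?_ hRz
    nlinarith [mul_nonneg (sub_nonneg.2 (by linarith : s ≤ t)) hA0,
      mul_nonneg (mul_nonneg hs.le ht.le) (neg_nonneg.2 hx0),
      mul_nonneg (mul_nonneg hs.le hs.le) (neg_nonneg.2 hx0),
      mul_nonneg (mul_nonneg ht.le ht.le) (neg_nonneg.2 hx0),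
      mul_le_mul_of_nonneg_right h2s (mul_nonneg ht.le (neg_nonneg.2 hx0)),
      mul_le_mul_of_nonneg_right h2s (mul_nonneg hs.le (neg_nonneg.2 hx0))]
  · -- x ≥ 0
    rw [abs_of_nonneg hx0] at hAk
    rcases hS with hxE | hA100
    · rcases le_total A (t * x + Dl) with hsm | hbg
      · -- show LHS ≤ 0
        refine le_trans ?_ hR0
        have hsA : s * A ≤ s * (t * x + Dl) := mul_le_mul_of_nonneg_left hsm hs.le
        have hsDl : 2 * (s * Dl) ≤ t * Dl := by nlinarith
        nlinarith [mul_nonneg hs.le hx0, mul_nonneg ht.le hx0,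
          mul_le_mul_of_nonneg_right (mul_le_mul_of_nonneg_right h2s ht.le) hx0,
          mul_le_mul_of_nonneg_right (mul_le_mul_of_nonneg_right ht2 ht.le) hx0,
          mul_nonneg (mul_nonneg hs.le hs.le) hx0]
      · refine le_trans ?_ hRz
        have h1 : (t - s) * (t * x + Dl) ≤ (t - s) * A :=
          mul_le_mul_of_nonneg_left hbg (by linarith)
        nlinarith [mul_le_mul_of_nonneg_right hAk hs.le,
          mul_nonneg (mul_nonneg hs.le ht.le) hx0,
          mul_nonneg hs.le hDl.le,
          mul_le_mul_of_nonneg_right h2s (mul_nonneg ht.le hx0),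
          mul_le_mul_of_nonneg_right ht2 (mul_nonneg ht.le hx0)]
    · -- 100 t x < A
      refine le_trans ?_ hRz
      have h1 : (t - s) * (100 * t * x) ≤ (t - s) * A :=
        mul_le_mul_of_nonneg_left hA100.le (by linarith)
      nlinarith [mul_le_mul_of_nonneg_right hAk hs.le,
        mul_nonneg (mul_nonneg hs.le ht.le) hx0,
        mul_le_mul_of_nonneg_right h2s (mul_nonneg ht.le hx0),
        mul_nonneg (mul_nonneg hs.le hs.le) hx0]

/-- Key pointwise domination: for `ℓ < k`, on the region, the `k`-th term is dominated by
the `ℓ`-th term. -/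
lemma key (N ℓ k : ℕ) (hℓ1 : 1 ≤ ℓ) (hlk : ℓ < k) (b : ℕ → Bool) (x y : ℝ)
    (hS : x < (1 / 4) * (2 : ℝ) ^ (-(3 * (N : ℤ))) ∨
      100 * (2 : ℝ) ^ (-(ℓ : ℤ)) * x < |y - bitsVal b ℓ * x|) :
    (2:ℝ) ^ (-(k:ℤ)) * phi N b k x y ≤ (2:ℝ) ^ (-(ℓ:ℤ)) * phi N b ℓ x y := by
  have pow_eq : ∀ a c : ℤ, (2:ℝ)^a * 2^c = 2^(a+c) := fun a c => (zpow_add₀ two_ne_zero a c).symm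
  have pow_le : ∀ a c : ℤ, a ≤ c → (2:ℝ)^a ≤ 2^c := fun a c h => zpow_le_zpow_right₀ one_le_two h
  have ht : (0:ℝ) < (2:ℝ) ^ (-(ℓ:ℤ)) := zpow_pos (by norm_num) _
  have hs : (0:ℝ) < (2:ℝ) ^ (-(k:ℤ)) := zpow_pos (by norm_num) _
  have hE : (0:ℝ) < (2:ℝ) ^ (-(3 * (N:ℤ))) := zpow_pos (by norm_num) _
  have hDl : (0:ℝ) < (2:ℝ) ^ (-(3 * (N:ℤ) - ℓ)) := zpow_pos (by norm_num) _
  have hDk : (0:ℝ) < (2:ℝ) ^ (-(3 * (N:ℤ) - k)) := zpow_pos (by norm_num) _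
  have hE1 : (2:ℝ) ^ (-(ℓ:ℤ)) * 2 ^ (-(3 * (N:ℤ) - ℓ)) = 2 ^ (-(3 * (N:ℤ))) := by
    rw [pow_eq]; ring_nf
  have hE2 : (2:ℝ) ^ (-(k:ℤ)) * 2 ^ (-(3 * (N:ℤ) - k)) = 2 ^ (-(3 * (N:ℤ))) := by
    rw [pow_eq]; ring_nf
  have h2s : 2 * (2:ℝ) ^ (-(k:ℤ)) ≤ 2 ^ (-(ℓ:ℤ)) := by
    have e : (2:ℝ) * 2 ^ (-(k:ℤ)) = 2 ^ (1 + -(k:ℤ)) := by rw [← pow_eq]; norm_num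
    rw [e]; exact pow_le _ _ (by omega)
  have ht2 : 2 * (2:ℝ) ^ (-(ℓ:ℤ)) ≤ 1 := by
    have e : (2:ℝ) * 2 ^ (-(ℓ:ℤ)) = 2 ^ (1 + -(ℓ:ℤ)) := by rw [← pow_eq]; norm_num
    rw [e, show (1:ℝ) = (2:ℝ)^(0:ℤ) from (zpow_zero 2).symm]
    exact pow_le _ _ (by omega)
  have hq : (4:ℝ) * (2:ℝ) ^ (-(ℓ:ℤ) - 2) = 2 ^ (-(ℓ:ℤ)) := by
    rw [show (4:ℝ) = (2:ℝ)^(2:ℤ) by norm_num, pow_eq]; ring_nf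
  have hAk : 4 * |y - bitsVal b k * x| ≤ 4 * |y - bitsVal b ℓ * x| + (2:ℝ) ^ (-(ℓ:ℤ)) * |x| := by
    have hd : |bitsVal b k - bitsVal b ℓ| ≤ 2 ^ (-(ℓ:ℤ) - 2) := bitsVal_diff b hlk.le
    have h1 : |y - bitsVal b k * x|
        ≤ |y - bitsVal b ℓ * x| + |bitsVal b k - bitsVal b ℓ| * |x| := by
      have he : y - bitsVal b k * x
          = (y - bitsVal b ℓ * x) - (bitsVal b k - bitsVal b ℓ) * x := by ring
      rw [he]
      calc |(y - bitsVal b ℓ * x) - (bitsVal b k - bitsVal b ℓ) * x|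
          ≤ |y - bitsVal b ℓ * x| + |(bitsVal b k - bitsVal b ℓ) * x| := abs_sub _ _
        _ = |y - bitsVal b ℓ * x| + |bitsVal b k - bitsVal b ℓ| * |x| := by rw [abs_mul]
    have h2 : |bitsVal b k - bitsVal b ℓ| * |x| ≤ 2 ^ (-(ℓ:ℤ) - 2) * |x| :=
      mul_le_mul_of_nonneg_right hd (abs_nonneg _)
    nlinarith [abs_nonneg x]
  have hS' : 4 * x < (2:ℝ) ^ (-(3 * (N:ℤ))) ∨
      100 * (2:ℝ) ^ (-(ℓ:ℤ)) * x < |y - bitsVal b ℓ * x| := by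
    rcases hS with h | h
    · left; linarith
    · right; exact h
  exact arith _ _ _ _ _ _ _ x hs ht hE hDl hDk hE1 hE2 h2s ht2
    (abs_nonneg _) (abs_nonneg _) hAk hS'

lemma maxPhi_le (N : ℕ) (hN : 1 ≤ N) (ℓ : ℕ) (hℓ1 : 1 ≤ ℓ) (hℓ2 : ℓ ≤ N)
    (b b' : ℕ → Bool) (hagree : ∀ i < ℓ, b i = b' i) (x y : ℝ)
    (hS : x < (1 / 4) * (2 : ℝ) ^ (-(3 * (N : ℤ))) ∨
      100 * (2 : ℝ) ^ (-(ℓ : ℤ)) * x < |y - bitsVal b ℓ * x|) :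
    maxPhi N b N x y ≤ maxPhi N b' N x y := by
  haveI : Nonempty (Finset.Icc 1 N) := ⟨⟨1, Finset.mem_Icc.mpr ⟨le_refl 1, hN⟩⟩⟩
  have hbdd : BddAbove (Set.range fun k : Finset.Icc 1 N =>
      (2 : ℝ) ^ (-((k : ℕ) : ℤ)) * phi N b' (k : ℕ) x y) :=
    Set.Finite.bddAbove (Set.finite_range _)
  refine ciSup_le fun ⟨k, hk⟩ => ?_
  rw [Finset.mem_Icc] at hk
  have hphi_eq : ∀ j : ℕ, j ≤ ℓ → phi N b j x y = phi N b' j x y := by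
    intro j hj
    unfold phi
    rw [bitsVal_congr b b' ℓ j hj hagree]
  rcases le_or_gt k ℓ with hkl | hkl
  · have : (2 : ℝ) ^ (-((k : ℕ) : ℤ)) * phi N b k x y
        = (2 : ℝ) ^ (-((k : ℕ) : ℤ)) * phi N b' k x y := by rw [hphi_eq k hkl]
    rw [this]
    exact le_ciSup hbdd ⟨k, Finset.mem_Icc.mpr hk⟩
  · have h1 : (2:ℝ) ^ (-(k:ℤ)) * phi N b k x y ≤ (2:ℝ) ^ (-(ℓ:ℤ)) * phi N b ℓ x y :=
      key N ℓ k hℓ1 hkl b x y hS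
    rw [hphi_eq ℓ le_rfl] at h1
    exact h1.trans (le_ciSup hbdd ⟨ℓ, Finset.mem_Icc.mpr ⟨hℓ1, hℓ2⟩⟩)

/-- If `b, b' ∈ {0,1}^N` agree in their first `ℓ` bits, then `Ṽ_b = Ṽ_{b'}`
on the set `{(x,y) : x < (1/4)·2^{-3N} or |y − [b]_ℓ x| > 100 · 2^{-ℓ} x}`. -/
theorem stmt_6 (N : ℕ) (hN : 1 ≤ N) (ℓ : ℕ) (hℓ1 : 1 ≤ ℓ) (hℓ2 : ℓ ≤ N)
    (b b' : ℕ → Bool) (hagree : ∀ i < ℓ, b i = b' i) (x y : ℝ)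
    (hS : x < (1 / 4) * (2 : ℝ) ^ (-(3 * (N : ℤ))) ∨
      100 * (2 : ℝ) ^ (-(ℓ : ℤ)) * x < |y - bitsVal b ℓ * x|) :
    Vt N b x y = Vt N b' x y := by
  have hagree' : ∀ i < ℓ, b' i = b i := fun i hi => (hagree i hi).symm
  have hS' : x < (1 / 4) * (2 : ℝ) ^ (-(3 * (N : ℤ))) ∨
      100 * (2 : ℝ) ^ (-(ℓ : ℤ)) * x < |y - bitsVal b' ℓ * x| := by
    rwa [← bitsVal_congr b b' ℓ ℓ le_rfl hagree]
  unfold Vt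
  have h1 := maxPhi_le N hN ℓ hℓ1 hℓ2 b b' hagree x y hS
  have h2 := maxPhi_le N hN ℓ hℓ1 hℓ2 b' b hagree' x y hS'
  have := le_antisymm h1 h2
  rw [this]
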